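/- Theorem 1 (decision-variable sweep computes the true Pareto front): assume A is nonempty, I(a) > 0 and S(a) > 0 for every actor a, and assume every configuration x has a minimal feasible period Pmin(x) (Pmin(x) is feasible for x and every feasible period of x is ≥ Pmin(x)). Define the objective space S = { (P, E(P, x)) : x a configuration, P a feasible period for x } and the explored set EP = { (Pmin(x), E(Pmin(x), x)) : x a configuration }. Then the set of points of EP that are non-dominated within EP equals the set of Pareto-optimal points of S. -/
import Mathlib


/-- Feasible periodic schedule `(σ, P)` for configuration `x` on the marked graph
with channels `C` and initial tokens `δ`. -/
def IsSchedule {A : Type*} (C : Set (A × A)) (δ : A × A → ℕ)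
    (τ w s : A → ℚ) (x : A → ℚ) (σ : A → ℚ) (P : ℚ) : Prop :=
  (∀ a : A, τ a + x a * (w a + s a) ≤ P) ∧
  (∀ a b : A, (a, b) ∈ C → σ a + τ a + x a * w a ≤ σ b + (δ (a, b) : ℚ) * P)

/-- A period `P` is feasible for configuration `x` if some start-time vector works. -/
def FeasiblePeriod {A : Type*} (C : Set (A × A)) (δ : A × A → ℕ)
    (τ w s : A → ℚ) (x : A → ℚ) (P : ℚ) : Prop :=
  ∃ σ : A → ℚ, IsSchedule C δ τ w s x σ P

/-- A configuration assigns `0` (always-active) or `1` (self-powered) to each actor. -/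
def IsConfig {A : Type*} (x : A → ℚ) : Prop := ∀ a, x a = 0 ∨ x a = 1

/-- Total energy per period: `p` execution power, `idl` idle power, `wkp` wake-up power,
`shd` shutdown power, `slp` sleep power. -/
def Etot {A : Type*} [Fintype A] (τ w s p idl wkp shd slp : A → ℚ)
    (x : A → ℚ) (P : ℚ) : ℚ :=
  ∑ a : A, ((1 - x a) * (p a * τ a + idl a * (P - τ a)) +
    x a * (wkp a * w a + p a * τ a + shd a * s a + slp a * (P - w a - τ a - s a)))

/-- `(P₁, E₁)` dominates `(P₂, E₂)` if it is coordinatewise `≤` and distinct. -/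
def Dominates (q r : ℚ × ℚ) : Prop := q.1 ≤ r.1 ∧ q.2 ≤ r.2 ∧ q ≠ r

/-- A point of `T` is Pareto-optimal in `T` if no other point of `T` dominates it. -/
def ParetoOptimal (T : Set (ℚ × ℚ)) (r : ℚ × ℚ) : Prop :=
  r ∈ T ∧ ∀ q ∈ T, ¬ Dominates q r


lemma Etot_mono {A : Type*} [Fintype A] (τ w s p idl wkp shd slp : A → ℚ)
    (hidl : ∀ a, 0 < idl a) (hslp : ∀ a, 0 < slp a)
    (x : A → ℚ) (hx : IsConfig x) {P Q : ℚ} (hPQ : P ≤ Q) :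
    Etot τ w s p idl wkp shd slp x P ≤ Etot τ w s p idl wkp shd slp x Q := by
  unfold Etot
  apply Finset.sum_le_sum
  intro a _
  rcases hx a with h | h <;> simp [h] <;> nlinarith [(hidl a).le, (hslp a).le]

/-- Theorem 1: the set of points of the explored set `EP` that are
non-dominated within `EP` coincides with the set of Pareto-optimal points of the
objective space `S`. -/
theorem decision_variable_sweep_computes_pareto_front
    {A : Type*} [Fintype A] (C : Set (A × A)) (δ : A × A → ℕ)
    (τ w s p idl wkp shd slp : A → ℚ)
    (hτ : ∀ a, 0 ≤ τ a) (hw : ∀ a, 0 ≤ w a) (hs : ∀ a, 0 ≤ s a)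
    (hp : ∀ a, 0 ≤ p a) (hwkp : ∀ a, 0 ≤ wkp a) (hshd : ∀ a, 0 ≤ shd a)
    (hne : Nonempty A) (hidl : ∀ a, 0 < idl a) (hslp : ∀ a, 0 < slp a)
    (Pmin : (A → ℚ) → ℚ)
    (hPmin : ∀ x : A → ℚ, IsConfig x →
      FeasiblePeriod C δ τ w s x (Pmin x) ∧
      ∀ P : ℚ, FeasiblePeriod C δ τ w s x P → Pmin x ≤ P) :
    {pt : ℚ × ℚ | ParetoOptimal
      {q : ℚ × ℚ | ∃ y : A → ℚ, IsConfig y ∧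
        q = (Pmin y, Etot τ w s p idl wkp shd slp y (Pmin y))} pt} =
    {pt : ℚ × ℚ | ParetoOptimal
      {q : ℚ × ℚ | ∃ (y : A → ℚ) (Q : ℚ), IsConfig y ∧
        FeasiblePeriod C δ τ w s y Q ∧
        q = (Q, Etot τ w s p idl wkp shd slp y Q)} pt} := by
  ext pt
  simp only [Set.mem_setOf_eq]
  constructor
  · rintro ⟨⟨y, hy, hpt⟩, hnd⟩
    refine ⟨⟨y, Pmin y, hy, (hPmin y hy).1, hpt⟩, ?_⟩
    rintro q ⟨z, Q, hz, hQ, rfl⟩ hdom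
    have h1 := (hPmin z hz).2 Q hQ
    have h2 := Etot_mono τ w s p idl wkp shd slp hidl hslp z hz h1
    have hq' := hnd (Pmin z, Etot τ w s p idl wkp shd slp z (Pmin z)) ⟨z, hz, rfl⟩
    have heq : (Pmin z, Etot τ w s p idl wkp shd slp z (Pmin z)) = pt := by
      by_contra hne'
      exact hq' ⟨le_trans h1 hdom.1, le_trans h2 hdom.2.1, hne'⟩
    apply hdom.2.2
    have e1 : Q = pt.1 := le_antisymm hdom.1 (by rw [← heq]; exact h1)
    have e2 : Etot τ w s p idl wkp shd slp z Q = pt.2 :=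
      le_antisymm hdom.2.1 (by rw [← heq]; exact h2)
    exact Prod.ext e1 e2
  · rintro ⟨⟨y, Q, hy, hQ, hpt⟩, hnd⟩
    have h1 := (hPmin y hy).2 Q hQ
    have h2 := Etot_mono τ w s p idl wkp shd slp hidl hslp y hy h1
    have hmem : pt = (Pmin y, Etot τ w s p idl wkp shd slp y (Pmin y)) := by
      by_contra hne'
      exact hnd _ ⟨y, Pmin y, hy, (hPmin y hy).1, rfl⟩
        ⟨by rw [hpt]; exact h1, by rw [hpt]; exact h2, Ne.symm hne'⟩
    refine ⟨⟨y, hy, hmem⟩, ?_⟩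
    rintro q ⟨z, hz, rfl⟩ hdom
    exact hnd _ ⟨z, Pmin z, hz, (hPmin z hz).1, rfl⟩ hdom
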